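/- arXiv:0803.3730 — 7 statements merged into one kernel-verified Lean document; each statement's English description precedes it below -/
import Mathlib

section
/- Let R be a discrete valuation ring with uniformizer π, let B be a commutative R-algebra, and let J ⊆ I be ideals of B such that J + πB = I + πB, the quotient B/I is flat as an R-module, and I/J is finitely generated as an R-module. Then I = J. -/
/-!
Write `x ∈ I` as `x = j + π b` with `j ∈ J`. Then `π b = x - j ∈ I`, and since `π` is a
nonzerodivisor on the flat module `B ⧸ I`, already `b ∈ I`. Hence `I ⊆ J + π I`: multiplication
by `π` is surjective on the finitely generated `R`-module `I / J`, which therefore vanishes by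
Nakayama's lemma.
-/

namespace Submodule

variable {R M : Type*} [CommRing R] [AddCommGroup M] [Module R M]

theorem le_of_le_sup_smul_of_finite_quotient {I : Ideal R} {N P : Submodule R M}
    [Module.Finite R (P ⧸ N.comap P.subtype)] (hI : I ≤ Ideal.jacobson ⊥)
    (hP : P ≤ N ⊔ I • P) : P ≤ N := by
  have hfg : (P.map N.mkQ).FG := by
    have := (Module.Finite.fg_top (R := R) (M := P ⧸ N.comap P.subtype)).map
      ((N.comap P.subtype).mapQ N P.subtype le_rfl)
    rw [map_top, range_mapQ] at this
    simpa [LinearMap.range_comp] using this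
  have hle : P.map N.mkQ ≤ ⊥ ⊔ I • P.map N.mkQ := by
    rw [bot_sup_eq, ← map_smul'']
    simpa using map_mono (f := N.mkQ) hP
  have := le_of_le_smul_of_le_jacobson_bot hfg hI hle
  rwa [map_le_iff_le_comap, comap_bot, ker_mkQ] at this

end Submodule

namespace Ideal

variable {R B : Type*} [CommRing R] [CommRing B] [Algebra R B] {r : R} {I J : Ideal B}

theorem mem_of_algebraMap_mul_mem (hr : IsSMulRegular (B ⧸ I) r) {b : B}
    (h : algebraMap R B r * b ∈ I) : b ∈ I := by
  rw [← Quotient.eq_zero_iff_mem] at h ⊢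
  refine hr (?_ : r • Quotient.mk I b = r • 0)
  rw [smul_zero, ← h, Algebra.smul_def, map_mul, Quotient.mk_algebraMap]

theorem restrictScalars_le_sup_smul_of_isSMulRegular (hr : IsSMulRegular (B ⧸ I) r) (hJI : J ≤ I)
    (hI : I ≤ J ⊔ span {algebraMap R B r}) :
    I.restrictScalars R ≤ J.restrictScalars R ⊔ span {r} • I.restrictScalars R := by
  intro x hx
  obtain ⟨j, hj, s, hs, rfl⟩ := Submodule.mem_sup.mp (hI hx)
  obtain ⟨b, rfl⟩ := mem_span_singleton'.mp hs
  have hb : b ∈ I := by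
    refine mem_of_algebraMap_mul_mem hr ?_
    rw [mul_comm, ← add_sub_cancel_left j (b * _)]
    exact I.sub_mem hx (hJI hj)
  refine Submodule.add_mem_sup hj ?_
  rw [mul_comm, ← Algebra.smul_def]
  exact Submodule.smul_mem_smul (mem_span_singleton_self r) hb

end Ideal

/-- Let `R` be a discrete valuation ring with uniformizer `π`, let `B` be a commutative
`R`-algebra, and let `J ⊆ I` be ideals of `B` such that `J + πB = I + πB`, the quotient
`B/I` is flat as an `R`-module, and `I/J` is finitely generated as an `R`-module.
Then `I = J`. -/
theorem stmt0 (R : Type*) [CommRing R] [IsDomain R] [IsDiscreteValuationRing R]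
    (π : R) (hπ : Irreducible π)
    (B : Type*) [CommRing B] [Algebra R B]
    (I J : Ideal B) (hJI : J ≤ I)
    (hmod : J + Ideal.span {algebraMap R B π} = I + Ideal.span {algebraMap R B π})
    (hflat : Module.Flat R (B ⧸ I))
    (hfg : Module.Finite R
      ((I.restrictScalars R) ⧸
        ((J.restrictScalars R).comap (I.restrictScalars R).subtype))) :
    I = J := by
  have hreg : IsSMulRegular (B ⧸ I) π :=
    Module.Flat.isSMulRegular_of_nonZeroDivisors (mem_nonZeroDivisors_of_ne_zero hπ.ne_zero)
  have hI : I ≤ J ⊔ Ideal.span {algebraMap R B π} := le_sup_left.trans hmod.ge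
  have hjac : Ideal.span {π} ≤ Ideal.jacobson ⊥ := by
    rw [IsLocalRing.jacobson_eq_maximalIdeal ⊥ bot_ne_top, Ideal.span_singleton_le_iff_mem]
    exact (IsLocalRing.mem_maximalIdeal π).mpr hπ.not_isUnit
  have hIJ : I.restrictScalars R ≤ J.restrictScalars R :=
    Submodule.le_of_le_sup_smul_of_finite_quotient hjac
      (Ideal.restrictScalars_le_sup_smul_of_isSMulRegular hreg hJI hI)
  exact le_antisymm hIJ hJI
end

section
/- Let R be a discrete valuation ring with uniformizer π and let M be a semireflexive R-module. Then M is a flat R-module, M is separated for the π-adic topology (i.e. the intersection of the submodules πⁿM over all n ≥ 0 is zero), and if moreover M ≠ 0 then M is a faithfully flat R-module. -/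
/-!
Evaluating against linear forms reduces everything to `R` itself. If `r` is regular and
`r • x = r • y`, then `r * f x = r * f y` for every `f : Dual R M`, so `f x = f y` and hence
`x = y`: `M` is torsion-free, hence flat over the Dedekind domain `R`. Likewise a linear form
maps `πⁿM` into `πⁿR`, so it kills `⋂ₙ πⁿM` by Krull's intersection theorem in `R`. Finally a
nonzero separated module cannot satisfy `πM = M`, which is faithful flatness over the local
ring `R`.
-/

/-- An `R`-module `M` is semireflexive if the canonical evaluation map from `M` to its
double dual is injective. -/
def Semireflexive (R : Type*) (M : Type*) [CommRing R] [AddCommGroup M] [Module R M] : Prop :=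
  Function.Injective (Module.Dual.eval R M)

open IsLocalRing

namespace Semireflexive

variable {R M : Type*} [CommRing R] [AddCommGroup M] [Module R M]

theorem ext_dual (hM : Semireflexive R M) {x y : M}
    (h : ∀ f : Module.Dual R M, f x = f y) : x = y :=
  hM (LinearMap.ext h)

theorem isTorsionFree (hM : Semireflexive R M) : Module.IsTorsionFree R M where
  isSMulRegular _ hr _ _ hxy := hM.ext_dual fun f ↦ hr.left <| by
    simpa only [smul_eq_mul, map_smul] using congrArg f hxy

theorem iInf_smul_top_eq_bot (hM : Semireflexive R M) {ι : Sort*} {I : ι → Ideal R}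
    (hI : ⨅ i, I i = ⊥) : ⨅ i, I i • (⊤ : Submodule R M) = ⊥ := by
  refine eq_bot_iff.mpr fun x hx ↦ (Submodule.mem_bot R).mpr <| hM.ext_dual fun f ↦ ?_
  have hfx : f x ∈ ⨅ i, I i := Submodule.mem_iInf _ |>.mpr fun i ↦ by
    simpa using Submodule.smul_top_le_comap_smul_top (I i) f (Submodule.mem_iInf _ |>.mp hx i)
  rw [hI] at hfx
  simpa using hfx

end Semireflexive

theorem Submodule.smul_top_ne_top_of_iInf_pow_smul_top_eq_bot {R M : Type*} [CommRing R]
    [AddCommGroup M] [Module R M] [Nontrivial M] {I : Ideal R}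
    (h : ⨅ n : ℕ, (I ^ n) • (⊤ : Submodule R M) = ⊥) : I • (⊤ : Submodule R M) ≠ ⊤ := by
  intro hI
  have hpow (n : ℕ) : (I ^ n) • (⊤ : Submodule R M) = ⊤ := by
    induction n with
    | zero => simp
    | succ n ih => rw [pow_succ', Submodule.mul_smul, ih, hI]
  simp [hpow] at h

theorem Module.FaithfullyFlat.of_maximalIdeal_smul_top_ne_top {R M : Type*} [CommRing R]
    [IsLocalRing R] [AddCommGroup M] [Module R M] [Module.Flat R M]
    (h : maximalIdeal R • (⊤ : Submodule R M) ≠ ⊤) : Module.FaithfullyFlat R M :=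
  ⟨fun _ hm ↦ eq_maximalIdeal hm ▸ h⟩

/-- Let `R` be a discrete valuation ring with uniformizer `π` and let `M` be a semireflexive
`R`-module.  Then `M` is a flat `R`-module, `M` is separated for the `π`-adic topology
(i.e. `⋂ₙ πⁿM = 0`), and if moreover `M ≠ 0` then `M` is a faithfully flat `R`-module. -/
theorem stmt1 (R : Type*) [CommRing R] [IsDomain R] [IsDiscreteValuationRing R]
    (π : R) (hπ : Irreducible π)
    (M : Type*) [AddCommGroup M] [Module R M]
    (hM : Semireflexive R M) :
    Module.Flat R M ∧
      (⨅ n : ℕ, (Ideal.span {π} ^ n) • (⊤ : Submodule R M)) = ⊥ ∧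
      (Nontrivial M → Module.FaithfullyFlat R M) := by
  have : Module.IsTorsionFree R M := hM.isTorsionFree
  have hπ_ne_top : Ideal.span {π} ≠ ⊤ := by
    simpa only [Ne, Ideal.span_singleton_eq_top] using hπ.not_isUnit
  have hsep : ⨅ n : ℕ, (Ideal.span {π} ^ n) • (⊤ : Submodule R M) = ⊥ :=
    hM.iInf_smul_top_eq_bot (Ideal.iInf_pow_eq_bot_of_isLocalRing _ hπ_ne_top)
  refine ⟨inferInstance, hsep, fun _ ↦ .of_maximalIdeal_smul_top_ne_top ?_⟩
  rw [hπ.maximalIdeal_eq]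
  exact Submodule.smul_top_ne_top_of_iInf_pow_smul_top_eq_bot hsep
end

section
/- Let p be a prime, n ≥ 1 an integer, and R a discrete valuation ring of mixed characteristic (0,p) with uniformizer π and normalized valuation v. Assume R contains a primitive pⁿ-th root of unity and let λ ∈ R be a nonzero element with p^{n-1}(p-1)·v(λ) ≤ v(p). Let A be a Noetherian integrally closed integral domain that is a faithfully flat R-algebra, such that A/πA is an integral domain and π lies in the Jacobson radical of A. Then for every unit x ∈ A^*: x^{pⁿ} ≡ 1 (mod λ^{pⁿ}A) if and only if x ≡ 1 (mod λA). -/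
/-!
Write `lam` as a unit times `π ^ m`. Since `π` stays prime in `A` and `x ^ pⁿ - 1` is the product
of the `pⁿ` factors `x - ζ ^ i`, divisibility of this product by `π ^ (m * pⁿ)` forces `π ^ m`
to divide one factor `x - ζ ^ i`. Because `p ∣ (1 - ζ) ^ φ(pⁿ)` and `lam ^ φ(pⁿ) ∣ p`, integral
closedness of `R` gives `lam ∣ ζ - 1`, hence `lam ∣ x - 1`. Conversely, if `e ∣ y - 1` and
`e ^ (p - 1) ∣ p`, the binomial theorem gives `e ^ p ∣ y ^ p - 1`; iterating this `n` times,
starting from `e = lam`, gives the other implication.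
-/

open Polynomial

theorem Prime.pow_dvd_or_pow_dvd_of_pow_add_dvd_mul {M : Type*} [CommMonoidWithZero M]
    [IsCancelMulZero M] {q : M} (hq : Prime q) {a b : ℕ} {x y : M} (h : q ^ (a + b) ∣ x * y) :
    q ^ a ∣ x ∨ q ^ b ∣ y := by
  simp only [pow_dvd_iff_le_emultiplicity, emultiplicity_mul hq] at h ⊢
  by_contra! hlt
  refine h.not_gt ?_
  push_cast
  exact ENat.add_lt_add hlt.1 hlt.2

theorem Prime.exists_pow_dvd_of_pow_mul_card_dvd_prod {M ι : Type*} [CommMonoidWithZero M]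
    [IsCancelMulZero M] {q : M} (hq : Prime q) {s : Finset ι} (hs : s.Nonempty) (f : ι → M) {m : ℕ}
    (h : q ^ (m * s.card) ∣ ∏ i ∈ s, f i) : ∃ i ∈ s, q ^ m ∣ f i := by
  induction hs using Finset.Nonempty.cons_induction with
  | singleton a => simpa using h
  | cons a s _ _ ih =>
    rw [Finset.prod_cons, Finset.card_cons, mul_add_one, add_comm] at h
    rcases hq.pow_dvd_or_pow_dvd_of_pow_add_dvd_mul h with hfa | hprod
    · exact ⟨a, Finset.mem_cons_self a s, hfa⟩
    · obtain ⟨i, hi, hdvd⟩ := ih hprod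
      exact ⟨i, Finset.mem_cons_of_mem hi, hdvd⟩

theorem IsPrimitiveRoot.natCast_dvd_one_sub_pow_totient {R : Type*} [CommRing R] [IsDomain R]
    {p : ℕ} [Fact p.Prime] {k : ℕ} {ζ : R} (hζ : IsPrimitiveRoot ζ (p ^ (k + 1))) :
    (p : R) ∣ (1 - ζ) ^ (p ^ (k + 1)).totient := by
  have hprod : ∏ μ ∈ primitiveRoots (p ^ (k + 1)) R, (1 - μ) = p := by
    rw [← eval_one_cyclotomic_prime_pow (R := R) k, cyclotomic_eq_prod_X_sub_primitiveRoots hζ]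
    simp [eval_prod]
  rw [← hprod, ← hζ.card_primitiveRoots, ← Finset.prod_const]
  refine Finset.prod_dvd_prod_of_dvd _ _ fun μ hμ ↦ ?_
  have hμ := (mem_primitiveRoots (pow_pos (Fact.out : p.Prime).pos _)).mp hμ
  obtain ⟨i, -, rfl⟩ := hμ.eq_pow_of_pow_eq_one hζ.pow_eq_one
  simpa using sub_dvd_pow_sub_pow 1 μ i

theorem IsPrimitiveRoot.dvd_sub_one_of_pow_dvd_natCast {R : Type*} [CommRing R] [IsDomain R]
    [IsIntegrallyClosed R] {p : ℕ} [Fact p.Prime] {k : ℕ} {ζ : R}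
    (hζ : IsPrimitiveRoot ζ (p ^ (k + 1))) {d : R} (hd : d ^ (p ^ k * (p - 1)) ∣ p) :
    d ∣ ζ - 1 := by
  have hp : p.Prime := Fact.out
  have htot : (p ^ (k + 1)).totient = p ^ k * (p - 1) := Nat.totient_prime_pow_succ hp k
  have hφ : p ^ k * (p - 1) ≠ 0 := htot ▸ (Nat.totient_pos.mpr (pow_pos hp.pos _)).ne'
  rw [dvd_sub_comm, ← IsIntegrallyClosed.pow_dvd_pow_iff hφ]
  exact hd.trans (htot ▸ hζ.natCast_dvd_one_sub_pow_totient)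

theorem IsPrimitiveRoot.exists_pow_dvd_sub_pow_of_pow_mul_dvd_pow_sub_one {A : Type*} [CommRing A]
    [IsDomain A] {ζ : A} {N : ℕ} [NeZero N] (hζ : IsPrimitiveRoot ζ N) {q : A} (hq : Prime q)
    {m : ℕ} {x : A} (h : q ^ (m * N) ∣ x ^ N - 1) : ∃ i, q ^ m ∣ x - ζ ^ i := by
  have hN : 0 < N := NeZero.pos N
  have hprod : x ^ N - 1 = ∏ c ∈ nthRootsFinset N (1 : A), (x - c) := by
    simpa [eval_prod] using congrArg (eval x) (X_pow_sub_one_eq_prod hN hζ)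
  have hcard : (nthRootsFinset N (1 : A)).card = N := hζ.card_nthRootsFinset
  have hne : (nthRootsFinset N (1 : A)).Nonempty := Finset.card_pos.mp (hcard.symm ▸ hN)
  obtain ⟨c, hc, hdvd⟩ := hq.exists_pow_dvd_of_pow_mul_card_dvd_prod hne (x - ·)
    (by rwa [hcard, ← hprod])
  obtain ⟨i, -, rfl⟩ := hζ.eq_pow_of_pow_eq_one ((Polynomial.mem_nthRootsFinset hN 1).mp hc)
  exact ⟨i, hdvd⟩

theorem IsPrimitiveRoot.dvd_sub_one_of_pow_dvd_pow_sub_one {A : Type*} [CommRing A]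
    [IsDomain A] {ζ : A} {N : ℕ} [NeZero N] (hζ : IsPrimitiveRoot ζ N) {q d : A} (hq : Prime q)
    {m : ℕ} (hd : Associated d (q ^ m)) (hdζ : d ∣ ζ - 1) {x : A} (h : d ^ N ∣ x ^ N - 1) :
    d ∣ x - 1 := by
  rw [(hd.pow_pow (n := N)).dvd_iff_dvd_left, ← pow_mul] at h
  obtain ⟨i, hi⟩ := hζ.exists_pow_dvd_sub_pow_of_pow_mul_dvd_pow_sub_one hq h
  rw [show x - 1 = (x - ζ ^ i) + (ζ ^ i - 1) by ring]
  exact dvd_add (hd.dvd_iff_dvd_left.mpr hi) (hdζ.trans (sub_one_dvd_pow_sub_one ζ i))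

theorem pow_prime_dvd_pow_prime_sub_one {A : Type*} [CommRing A] {p : ℕ} (hp : p.Prime)
    {e y : A} (he : e ^ (p - 1) ∣ p) (hy : e ∣ y - 1) : e ^ p ∣ y ^ p - 1 := by
  obtain ⟨r, hr⟩ := exists_add_pow_prime_eq hp (y - 1) 1
  have hexp : y ^ p - 1 = (y - 1) ^ p + p * (y - 1) * r := by
    rw [sub_add_cancel] at hr
    linear_combination hr
  rw [hexp]
  refine dvd_add (pow_dvd_pow_of_dvd hy p) ?_
  rw [← pow_sub_one_mul hp.ne_zero]
  exact (mul_dvd_mul he hy).mul_right r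

theorem pow_prime_pow_dvd_pow_prime_pow_sub_one {A : Type*} [CommRing A] {p : ℕ} (hp : p.Prime)
    {d x : A} (hx : d ∣ x - 1) (k : ℕ) (hd : d ^ (p ^ k * (p - 1)) ∣ p) :
    d ^ p ^ (k + 1) ∣ x ^ p ^ (k + 1) - 1 := by
  induction k with
  | zero => simpa using pow_prime_dvd_pow_prime_sub_one hp (by simpa using hd) hx
  | succ k ih =>
    have hd' : d ^ (p ^ k * (p - 1)) ∣ p :=
      (pow_dvd_pow d (Nat.mul_le_mul_right _ (Nat.pow_le_pow_right hp.pos k.le_succ))).trans hd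
    rw [pow_succ p (k + 1), pow_mul, pow_mul]
    refine pow_prime_dvd_pow_prime_sub_one hp ?_ (ih hd')
    rwa [← pow_mul]

theorem stmt8_general (p : ℕ) (hp : p.Prime) (n : ℕ) (hn : 1 ≤ n)
    (R : Type*) [CommRing R] [IsDomain R] [IsDiscreteValuationRing R]
    (π : R) (hπ : Irreducible π)
    (ζ : R) (hζ : IsPrimitiveRoot ζ (p ^ n))
    (lam : R) (hlam : lam ≠ 0) (hlamp : lam ^ (p ^ (n - 1) * (p - 1)) ∣ (p : R))
    (A : Type*) [CommRing A] [IsDomain A]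
    [Algebra R A] [Module.FaithfullyFlat R A]
    (hAint : IsDomain (A ⧸ Ideal.span {algebraMap R A π})) :
    ∀ x : Aˣ,
      ((x : A) ^ (p ^ n) - 1 ∈ Ideal.span {algebraMap R A (lam ^ (p ^ n))} ↔
        (x : A) - 1 ∈ Ideal.span {algebraMap R A lam}) := by
  obtain ⟨k, rfl⟩ : ∃ k, n = k + 1 := ⟨n - 1, by omega⟩
  have : Fact p.Prime := ⟨hp⟩
  rw [Nat.add_sub_cancel] at hlamp
  have hf : Function.Injective (algebraMap R A) := FaithfulSMul.algebraMap_injective R A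
  have hϖ : Prime (algebraMap R A π) :=
    (Ideal.span_singleton_prime ((map_ne_zero_iff _ hf).mpr hπ.ne_zero)).mp
      ((Ideal.Quotient.isDomain_iff_prime _).mp hAint)
  obtain ⟨m, hm⟩ := IsDiscreteValuationRing.associated_pow_irreducible hlam hπ
  intro x
  simp only [Ideal.mem_span_singleton, map_pow]
  constructor
  · refine (hζ.map_of_injective hf).dvd_sub_one_of_pow_dvd_pow_sub_one hϖ
      (by simpa using hm.map (algebraMap R A)) ?_
    simpa using map_dvd (algebraMap R A) (hζ.dvd_sub_one_of_pow_dvd_natCast hlamp)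
  · refine fun hx ↦ pow_prime_pow_dvd_pow_prime_pow_sub_one hp hx k ?_
    simpa using map_dvd (algebraMap R A) hlamp

/-- Let `p` be a prime, `n ≥ 1`, and `R` a discrete valuation ring of mixed characteristic
`(0,p)` with uniformizer `π`, containing a primitive `pⁿ`-th root of unity, and let
`lam ∈ R` be nonzero with `p^{n-1}(p-1)·v(lam) ≤ v(p)` (expressed as the divisibility
`lam^{p^{n-1}(p-1)} ∣ p`).  Let `A` be a Noetherian integrally closed integral domain which
is a faithfully flat `R`-algebra such that `A/πA` is an integral domain and `π` lies in the
Jacobson radical of `A`.  Then for every unit `x` of `A`: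
`x^{pⁿ} ≡ 1 (mod lam^{pⁿ}A)` if and only if `x ≡ 1 (mod lam·A)`. -/
theorem stmt8 (p : ℕ) (hp : p.Prime) (n : ℕ) (hn : 1 ≤ n)
    (R : Type*) [CommRing R] [IsDomain R] [IsDiscreteValuationRing R] [CharZero R]
    (π : R) (hπ : Irreducible π)
    (hres : CharP (R ⧸ Ideal.span {π}) p)
    (ζ : R) (hζ : IsPrimitiveRoot ζ (p ^ n))
    (lam : R) (hlam : lam ≠ 0) (hlamp : lam ^ (p ^ (n - 1) * (p - 1)) ∣ (p : R))
    (A : Type*) [CommRing A] [IsDomain A] [IsNoetherianRing A] [IsIntegrallyClosed A]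
    [Algebra R A] [Module.FaithfullyFlat R A]
    (hAint : IsDomain (A ⧸ Ideal.span {algebraMap R A π}))
    (hjac : algebraMap R A π ∈ (⊥ : Ideal A).jacobson) :
    ∀ x : Aˣ,
      ((x : A) ^ (p ^ n) - 1 ∈ Ideal.span {algebraMap R A (lam ^ (p ^ n))} ↔
        (x : A) - 1 ∈ Ideal.span {algebraMap R A lam}) :=
  stmt8_general p hp n hn R π hπ ζ hζ lam hlam hlamp A hAint
end

section
/- Let R be a discrete valuation ring with uniformizer π whose residue field has characteristic p > 0, and let A be a commutative R-algebra that is flat as an R-module and such that A/πA is an integral domain. Let γ₁ ≤ m and γ₂ be natural numbers, and let H = Σ_{k=0}^{p-1} a_k T^k ∈ A[T] be a polynomial of degree at most p−1 whose constant coefficient a₀ lies in πA but which has some coefficient not lying in πA; let H' denote its formal derivative. If b ∈ πR satisfies b·H ≡ π^{m-γ₁}·H' (mod π^{γ₂}A[T]), then b ∈ π^{γ₂}R. -/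
/-!
Write `b = u π^n` with `u` a unit and suppose `n < γ₂`, so the congruence holds modulo `π^(n+1)`.
Since `π` is regular on `A` (flatness), one may cancel the smaller of `π^n` and `π^(m-γ₁)`;
reducing modulo `π` then gives in `(A/πA)[T]` either `ū·H̄ = c·H̄'`, impossible for `H̄ ≠ 0` by
looking at the leading coefficient, or `H̄' = 0`, which forces `H̄ = 0` because the constant term
of `H̄` vanishes and `1, …, p-1` are units. Either way `H ≡ 0 (mod π)`, a contradiction.
-/

theorem IsLocalRing.isUnit_natCast_of_lt {R : Type*} [CommRing R] [IsLocalRing R] {I : Ideal R}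
    (hI : maximalIdeal R ≤ I) {p : ℕ} [CharP (R ⧸ I) p] {k : ℕ} (hk0 : 0 < k) (hkp : k < p) :
    IsUnit (k : R) := by
  rw [← notMem_maximalIdeal]
  intro hk
  have hkI : (k : R ⧸ I) = 0 := by
    rw [← map_natCast (Ideal.Quotient.mk I)]
    exact Ideal.Quotient.eq_zero_iff_mem.2 (hI hk)
  have hpk := Nat.le_of_dvd hk0 ((CharP.cast_eq_zero_iff _ p k).1 hkI)
  omega

namespace Polynomial

theorem eq_zero_of_C_mul_eq_C_mul_derivative {S : Type*} [CommSemiring S] {u c : S}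
    (hu : IsUnit u) {F : S[X]} (h : C u * F = C c * derivative F) : F = 0 := by
  rw [← leadingCoeff_eq_zero]
  have hlead := congrArg (coeff · F.natDegree) h
  simp only [coeff_C_mul, coeff_derivative, coeff_eq_zero_of_natDegree_lt (Nat.lt_succ_self _),
    zero_mul, mul_zero] at hlead
  exact hu.mul_right_eq_zero.1 hlead

theorem eq_zero_of_derivative_eq_zero_of_coeff_zero_eq_zero {S : Type*} [CommSemiring S]
    {F : S[X]} (hF : derivative F = 0) (h0 : F.coeff 0 = 0)
    (hunit : ∀ k, 0 < k → k ≤ F.natDegree → IsUnit (k : S)) : F = 0 := by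
  ext k
  rw [coeff_zero]
  rcases Nat.eq_zero_or_pos k with rfl | hk
  · exact h0
  rcases le_or_gt k F.natDegree with hkd | hkd
  · obtain ⟨i, rfl⟩ := Nat.exists_eq_succ_of_ne_zero hk.ne'
    have hi := congrArg (coeff · i) hF
    simp only [coeff_derivative, coeff_zero] at hi
    exact (hunit _ hk hkd).mul_right_eq_zero.1 (by rw [mul_comm]; exact_mod_cast hi)
  · exact coeff_eq_zero_of_natDegree_lt hkd

variable {A : Type*} [CommRing A] {ϖ : A}

theorem map_mk_span_eq_zero_of_C_pow_mul_mem (hϖ : IsSMulRegular A ϖ) {n N : ℕ} (hnN : n < N)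
    {G : A[X]} (h : C (ϖ ^ n) * G ∈ Ideal.span {C (ϖ ^ N)}) :
    G.map (Ideal.Quotient.mk (Ideal.span {ϖ})) = 0 := by
  obtain ⟨d, rfl⟩ := Nat.exists_eq_add_of_lt hnN
  obtain ⟨Q, hQ⟩ := Ideal.mem_span_singleton.1 h
  have hG : G = C (ϖ ^ (d + 1)) * Q := by
    refine (hϖ.pow n).polynomial ?_
    simp only [smul_eq_C_mul, hQ, ← mul_assoc, ← C_mul, ← pow_add]
    ring_nf
  simp [hG, Ideal.Quotient.mk_singleton_self]

theorem map_mk_span_eq_zero_of_C_mul_sub_C_mul_derivative_mem (hϖ : IsSMulRegular A ϖ)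
    {u : A} (hu : IsUnit u) {n e N : ℕ} (hnN : n < N) {H : A[X]}
    (h0 : H.coeff 0 ∈ Ideal.span {ϖ}) (hunit : ∀ k, 0 < k → k ≤ H.natDegree → IsUnit (k : A))
    (h : C (u * ϖ ^ n) * H - C (ϖ ^ e) * derivative H ∈ Ideal.span {C (ϖ ^ N)}) :
    H.map (Ideal.Quotient.mk (Ideal.span {ϖ})) = 0 := by
  set q := Ideal.Quotient.mk (Ideal.span {ϖ})
  rcases le_or_gt n e with hne | hen
  · obtain ⟨d, rfl⟩ := Nat.exists_eq_add_of_le hne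
    have hfactor : C (ϖ ^ n) * (C u * H - C (ϖ ^ d) * derivative H) =
        C (u * ϖ ^ n) * H - C (ϖ ^ (n + d)) * derivative H := by
      simp only [C_mul, pow_add]; ring
    have hred := map_mk_span_eq_zero_of_C_pow_mul_mem hϖ hnN (hfactor ▸ h)
    rw [Polynomial.map_sub, sub_eq_zero, Polynomial.map_mul, Polynomial.map_mul, map_C, map_C,
      ← derivative_map] at hred
    exact eq_zero_of_C_mul_eq_C_mul_derivative (hu.map q) hred
  · obtain ⟨d, rfl⟩ := Nat.exists_eq_add_of_lt hen
    have hfactor : C (ϖ ^ e) * (C (u * ϖ ^ (d + 1)) * H - derivative H) =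
        C (u * ϖ ^ (e + d + 1)) * H - C (ϖ ^ e) * derivative H := by
      simp only [C_mul, pow_add]; ring
    have hred := map_mk_span_eq_zero_of_C_pow_mul_mem hϖ (by omega) (hfactor ▸ h)
    apply eq_zero_of_derivative_eq_zero_of_coeff_zero_eq_zero
    · simpa [derivative_map, q, Ideal.Quotient.mk_singleton_self] using hred
    · rwa [coeff_map, Ideal.Quotient.eq_zero_iff_mem]
    · intro k hk hkd
      simpa using (hunit k hk (hkd.trans natDegree_map_le)).map q

end Polynomial

open Polynomial in
theorem stmt10_general (R : Type*) [CommRing R] [IsDomain R] [IsDiscreteValuationRing R]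
    (π : R) (hπ : Irreducible π)
    (p : ℕ) (hres : CharP (R ⧸ Ideal.span {π}) p)
    (A : Type*) [CommRing A] [Algebra R A] [Module.Flat R A]
    (m γ₁ γ₂ : ℕ)
    (H : A[X]) (hdeg : H.natDegree ≤ p - 1)
    (h0 : H.coeff 0 ∈ Ideal.span {algebraMap R A π})
    (hH : ∃ k, H.coeff k ∉ Ideal.span {algebraMap R A π})
    (b : R)
    (h : C (algebraMap R A b) * H - C (algebraMap R A (π ^ (m - γ₁))) * derivative H ∈
      Ideal.span {(C (algebraMap R A (π ^ γ₂)) : A[X])}) :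
    π ^ γ₂ ∣ b := by
  have hϖ : IsSMulRegular A (algebraMap R A π) := (IsSMulRegular.of_ne_zero hπ.ne_zero).of_flat
  have hunit (k : ℕ) (hk : 0 < k) (hkd : k ≤ H.natDegree) : IsUnit (k : A) := by
    simpa using ((IsLocalRing.isUnit_natCast_of_lt (p := p) hπ.maximalIdeal_eq.le hk
      (by omega)).map (algebraMap R A))
  rcases eq_or_ne b 0 with rfl | hb0
  · exact dvd_zero _
  obtain ⟨n, u, rfl⟩ := IsDiscreteValuationRing.eq_unit_mul_pow_irreducible hb0 hπ
  by_contra hdvd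
  have hn : n < γ₂ := by
    by_contra! hγn
    exact hdvd (Dvd.dvd.mul_left (pow_dvd_pow π hγn) _)
  have hred := map_mk_span_eq_zero_of_C_mul_sub_C_mul_derivative_mem hϖ
    (u.isUnit.map (algebraMap R A)) hn h0 hunit (by simpa only [map_mul, map_pow] using h)
  obtain ⟨k, hk⟩ := hH
  exact hk (Ideal.Quotient.eq_zero_iff_mem.1 (by simpa using congrArg (coeff · k) hred))

open Polynomial in
/-- Let `R` be a discrete valuation ring with uniformizer `π` whose residue field has
characteristic `p > 0`, and let `A` be a commutative `R`-algebra, flat as an `R`-module,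
such that `A/πA` is an integral domain.  Let `γ₁ ≤ m`, `γ₂` be natural numbers and let
`H ∈ A[T]` be of degree at most `p-1`, with constant coefficient in `πA` but some
coefficient not in `πA`.  If `b ∈ πR` satisfies `b·H ≡ π^{m-γ₁}·H' (mod π^{γ₂}A[T])`,
then `b ∈ π^{γ₂}R`. -/
theorem stmt10 (R : Type*) [CommRing R] [IsDomain R] [IsDiscreteValuationRing R]
    (π : R) (hπ : Irreducible π)
    (p : ℕ) (hp : 0 < p) (hres : CharP (R ⧸ Ideal.span {π}) p)
    (A : Type*) [CommRing A] [Algebra R A] [Module.Flat R A]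
    (hAdom : IsDomain (A ⧸ Ideal.span {algebraMap R A π}))
    (m γ₁ γ₂ : ℕ) (hγ₁m : γ₁ ≤ m)
    (H : A[X]) (hdeg : H.natDegree ≤ p - 1)
    (h0 : H.coeff 0 ∈ Ideal.span {algebraMap R A π})
    (hH : ∃ k, H.coeff k ∉ Ideal.span {algebraMap R A π})
    (b : R) (hb : π ∣ b)
    (h : C (algebraMap R A b) * H - C (algebraMap R A (π ^ (m - γ₁))) * derivative H ∈
      Ideal.span {(C (algebraMap R A (π ^ γ₂)) : A[X])}) :
    π ^ γ₂ ∣ b :=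
  stmt10_general R π hπ p hres A m γ₁ γ₂ H hdeg h0 hH b h
end

section
/- Let R be a discrete valuation ring with uniformizer π, let A be a commutative R-algebra, let b ∈ R, let γ₁ ≤ m and γ₂ be natural numbers, and let H ∈ A[T]. Suppose b·H − π^{m-γ₁}·H' ∈ π^{γ₂}A[T], where H' is the formal derivative of H. Then for every integer k ≥ 1, writing H^{(k)} for the k-th iterated formal derivative of H, one has b^k·H − π^{k(m-γ₁)}·H^{(k)} ∈ π^{γ₂}·b^{k-1}·A[T] + π^{γ₂+(k-1)(m-γ₁)}·A[T]. -/
/-!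
Write `e = m - γ₁`, `p = π ^ e`, `q = π ^ γ₂` and `E n = b ^ (n + 1) H - p ^ (n + 1) H^{(n + 1)}`.
Applying `D^{n+1}` to the hypothesis `b H - p H' = q Q` gives
`E (n + 1) = b • E n + p ^ (n + 1) q Q^{(n + 1)}`, so the induction only needs
`p ^ n b ∈ (b ^ (n + 1), p ^ (n + 1))`. In a valuation ring `p` and `b` are comparable under
divisibility, and either way this membership is immediate.
-/

theorem pow_mul_mem_span_pow_succ_of_dvd_or_dvd {R : Type*} [CommRing R] {b p : R}
    (hbp : p ∣ b ∨ b ∣ p) (n : ℕ) :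
    p ^ n * b ∈ Ideal.span {b ^ (n + 1), p ^ (n + 1)} := by
  rw [Ideal.mem_span_pair]
  rcases hbp with ⟨c, rfl⟩ | ⟨d, rfl⟩
  · exact ⟨0, c, by ring⟩
  · exact ⟨d ^ n, 0, by ring⟩

theorem exists_pow_smul_sub_pow_smul_iterate_eq {R M : Type*} [CommRing R] [AddCommGroup M]
    [Module R M] (D : M →ₗ[R] M) {b p q : R} (hbp : p ∣ b ∨ b ∣ p) {x y : M}
    (h : b • x - p • D x = q • y) (n : ℕ) :
    ∃ u v : M,
      b ^ (n + 1) • x - p ^ (n + 1) • D^[n + 1] x = (q * b ^ n) • u + (q * p ^ n) • v := by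
  induction n with
  | zero => exact ⟨y, 0, by simpa using h⟩
  | succ n ih =>
    obtain ⟨u, v, huv⟩ := ih
    obtain ⟨c₁, c₂, hc⟩ :=
      Ideal.mem_span_pair.mp (pow_mul_mem_span_pow_succ_of_dvd_or_dvd hbp n)
    have hD : b • D^[n + 1] x - p • D^[n + 2] x = q • D^[n + 1] y := by
      simpa only [map_sub, map_smul, Module.End.pow_apply, ← Function.iterate_succ_apply]
        using congrArg (D ^ (n + 1)) h
    refine ⟨u + c₁ • v, c₂ • v + D^[n + 1] y, ?_⟩
    linear_combination (norm := module) b • huv + p ^ (n + 1) • hD - hc • (q • v)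

open Polynomial in
theorem stmt11_general (R : Type*) [CommRing R] [IsDomain R] [IsDiscreteValuationRing R]
    (π : R)
    (A : Type*) [CommRing A] [Algebra R A]
    (b : R) (m γ₁ γ₂ : ℕ)
    (H : A[X])
    (h : C (algebraMap R A b) * H - C (algebraMap R A (π ^ (m - γ₁))) * derivative H ∈
      Ideal.span {(C (algebraMap R A (π ^ γ₂)) : A[X])}) :
    ∀ k : ℕ, 1 ≤ k →
      C (algebraMap R A (b ^ k)) * H -
          C (algebraMap R A (π ^ (k * (m - γ₁)))) * (derivative^[k] H) ∈
        Ideal.span {(C (algebraMap R A (π ^ γ₂ * b ^ (k - 1))) : A[X]),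
          (C (algebraMap R A (π ^ (γ₂ + (k - 1) * (m - γ₁)))) : A[X])} := by
  intro k hk
  obtain ⟨n, rfl⟩ := Nat.exists_eq_add_of_le' hk
  obtain ⟨Q, hQ⟩ := Ideal.mem_span_singleton.mp h
  simp only [← Polynomial.algebraMap_apply, ← Algebra.smul_def] at hQ ⊢
  obtain ⟨u, v, huv⟩ := exists_pow_smul_sub_pow_smul_iterate_eq
    ((derivative : A[X] →ₗ[A] A[X]).restrictScalars R)
    (ValuationRing.dvd_total (π ^ (m - γ₁)) b) hQ n
  rw [LinearMap.coe_restrictScalars] at huv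
  refine Ideal.mem_span_pair.mpr ⟨u, v, ?_⟩
  rw [Nat.add_sub_cancel, pow_add, pow_mul' π (n + 1), pow_mul' π n, huv, mul_comm u, mul_comm v,
    ← Algebra.smul_def, ← Algebra.smul_def]

open Polynomial in
/-- Let `R` be a discrete valuation ring with uniformizer `π`, `A` a commutative
`R`-algebra, `b ∈ R`, `γ₁ ≤ m`, `γ₂` natural numbers and `H ∈ A[T]`.  If
`b·H − π^{m-γ₁}·H' ∈ π^{γ₂}A[T]`, then for every `k ≥ 1`,
`b^k·H − π^{k(m-γ₁)}·H^{(k)} ∈ π^{γ₂}·b^{k-1}·A[T] + π^{γ₂+(k-1)(m-γ₁)}·A[T]`,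
where `H^{(k)}` is the `k`-th iterated formal derivative of `H`. -/
theorem stmt11 (R : Type*) [CommRing R] [IsDomain R] [IsDiscreteValuationRing R]
    (π : R) (hπ : Irreducible π)
    (A : Type*) [CommRing A] [Algebra R A]
    (b : R) (m γ₁ γ₂ : ℕ) (hγ₁m : γ₁ ≤ m)
    (H : A[X])
    (h : C (algebraMap R A b) * H - C (algebraMap R A (π ^ (m - γ₁))) * derivative H ∈
      Ideal.span {(C (algebraMap R A (π ^ γ₂)) : A[X])}) :
    ∀ k : ℕ, 1 ≤ k →
      C (algebraMap R A (b ^ k)) * H -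
          C (algebraMap R A (π ^ (k * (m - γ₁)))) * (derivative^[k] H) ∈
        Ideal.span {(C (algebraMap R A (π ^ γ₂ * b ^ (k - 1))) : A[X]),
          (C (algebraMap R A (π ^ (γ₂ + (k - 1) * (m - γ₁)))) : A[X])} :=
  stmt11_general R π A b m γ₁ γ₂ H h
end

section
/- Let R be a discrete valuation ring with uniformizer π and fraction field K, and let p ≥ 2 be an integer. Then there do not exist a unit f of the Laurent polynomial ring R[Z, Z⁻¹] and a unit g of the Laurent polynomial ring K[Z, Z⁻¹] such that f·g^p = π·Z in K[Z, Z⁻¹]. -/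
/-!
Units of a Laurent polynomial ring over a domain are monomials `a Z^n` with `a` a unit, so an
identity `f g^p = π Z` forces `a c^p = π` in `K` with `a ∈ Rˣ`. Writing `c = r / s` and
`r = u π^n`, `s = v π^m` turns this into `π^(pn) ~ π^(pm + 1)` in `R`, i.e. `p ∣ 1`.
-/

/-- The ring homomorphism `R[Z,Z⁻¹] → K[Z,Z⁻¹]` between Laurent polynomial rings induced by
a ring homomorphism `φ : R → K` on coefficients. -/
noncomputable def LaurentPolynomial.mapRingHom {R K : Type*} [CommSemiring R] [CommSemiring K]
    (φ : R →+* K) : LaurentPolynomial R →+* LaurentPolynomial K :=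
  AddMonoidAlgebra.liftNCRingHom (LaurentPolynomial.C.comp φ)
    { toFun := fun n => LaurentPolynomial.T n.toAdd
      map_one' := LaurentPolynomial.T_zero
      map_mul' := fun x y => LaurentPolynomial.T_add x.toAdd y.toAdd }
    (fun _ _ => Commute.all _ _)

namespace IsDiscreteValuationRing

variable {R : Type*} [CommRing R] [IsDomain R] [IsDiscreteValuationRing R] {π : R}

theorem unit_mul_pow_ne_irreducible_mul_pow (hπ : Irreducible π) {p : ℕ} (hp : p ≠ 1)
    (a : Rˣ) {r s : R} (hr : r ≠ 0) (hs : s ≠ 0) : ↑a * r ^ p ≠ π * s ^ p := by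
  intro h
  obtain ⟨n, u, rfl⟩ := eq_unit_mul_pow_irreducible hr hπ
  obtain ⟨m, v, rfl⟩ := eq_unit_mul_pow_irreducible hs hπ
  have hpow : ↑(a * u ^ p) * π ^ (n * p) = ↑(v ^ p) * π ^ (m * p + 1) := by
    push_cast
    rw [pow_mul, pow_succ, pow_mul]
    linear_combination h
  have hexp := unit_mul_pow_congr_pow hπ hπ _ _ _ _ hpow
  have hdvd : p ∣ 1 := (Nat.dvd_add_right (dvd_mul_left p m)).mp (hexp ▸ dvd_mul_left p n)
  exact hp (Nat.dvd_one.mp hdvd)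

theorem algebraMap_unit_mul_pow_ne (hπ : Irreducible π) {K : Type*} [Field K] [Algebra R K]
    [IsFractionRing R K] {p : ℕ} (hp : p ≠ 1) (a : Rˣ) {c : K} (hc : c ≠ 0) :
    algebraMap R K a * c ^ p ≠ algebraMap R K π := by
  obtain ⟨r, s, hs, rfl⟩ := IsFractionRing.div_surjective (A := R) c
  have hs₀ : s ≠ 0 := nonZeroDivisors.ne_zero hs
  have hsK : algebraMap R K s ≠ 0 := IsFractionRing.to_map_ne_zero_of_mem_nonZeroDivisors hs
  have hr₀ : r ≠ 0 := by rintro rfl; simp at hc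
  intro h
  refine unit_mul_pow_ne_irreducible_mul_pow hπ hp a hr₀ hs₀ (IsFractionRing.injective R K ?_)
  rw [div_pow, mul_div_assoc', div_eq_iff (pow_ne_zero p hsK)] at h
  simpa only [map_mul, map_pow] using h

end IsDiscreteValuationRing

namespace LaurentPolynomial

open Polynomial

theorem exists_eq_C_mul_T_of_isUnit {S : Type*} [CommRing S] [IsDomain S] {u : S[T;T⁻¹]}
    (hu : IsUnit u) : ∃ (a : Sˣ) (n : ℤ), u = C (a : S) * T n := by
  obtain ⟨w, hw⟩ := hu.exists_right_inv
  obtain ⟨n, f, hf⟩ := u.exists_T_pow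
  obtain ⟨m, g, hg⟩ := w.exists_T_pow
  have hfg : f * g = X ^ (n + m) := by
    apply toLaurent_injective
    rw [map_mul, hf, hg, toLaurent_X_pow, mul_mul_mul_comm, hw, one_mul, ← T_add]
    push_cast
    rfl
  obtain ⟨i, -, hassoc⟩ := (dvd_prime_pow prime_X _).mp (Dvd.intro g hfg)
  obtain ⟨v, hv⟩ := hassoc.symm
  obtain ⟨a, ha, hCa⟩ := Polynomial.isUnit_iff.mp v.isUnit
  refine ⟨ha.unit, i - n, ?_⟩
  have hu : u = toLaurent f * T (-n) := by
    rw [hf, mul_assoc, ← T_add, add_neg_cancel, T_zero, mul_one]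
  rw [hu, ← hv, ← hCa, map_mul, toLaurent_X_pow, toLaurent_C, IsUnit.unit_spec, T_sub]
  ring

theorem mapRingHom_C_mul_T {R K : Type*} [CommSemiring R] [CommSemiring K] (φ : R →+* K)
    (a : R) (n : ℤ) : mapRingHom φ (C a * T n) = C (φ a) * T n := by
  rw [← single_eq_C_mul_T]
  exact AddMonoidAlgebra.liftNCRingHom_single _ _ _ n a

theorem eq_of_C_mul_T_eq_C_mul_T {R : Type*} [Semiring R] {a b : R} {m n : ℤ} (hb : b ≠ 0)
    (h : C a * T m = C b * T n) : a = b := by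
  rw [← single_eq_C_mul_T, ← single_eq_C_mul_T] at h
  rcases AddMonoidAlgebra.single_inj.mp h with ⟨-, hab⟩ | ⟨-, hb₀⟩
  · exact hab
  · exact absurd hb₀ hb

end LaurentPolynomial

open LaurentPolynomial in
/-- Let `R` be a discrete valuation ring with uniformizer `π` and fraction field `K`, and
let `p ≥ 2` be an integer.  Then there do not exist a unit `f` of `R[Z,Z⁻¹]` and a unit `g`
of `K[Z,Z⁻¹]` such that `f·g^p = π·Z` in `K[Z,Z⁻¹]`. -/
theorem stmt15 (R : Type*) [CommRing R] [IsDomain R] [IsDiscreteValuationRing R]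
    (π : R) (hπ : Irreducible π)
    (K : Type*) [Field K] [Algebra R K] [IsFractionRing R K]
    (p : ℕ) (hp : 2 ≤ p) :
    ¬ ∃ (f : (LaurentPolynomial R)ˣ) (g : (LaurentPolynomial K)ˣ),
      LaurentPolynomial.mapRingHom (algebraMap R K) (f : LaurentPolynomial R) *
          (g : LaurentPolynomial K) ^ p =
        LaurentPolynomial.C (algebraMap R K π) * LaurentPolynomial.T 1 := by
  rintro ⟨f, g, h⟩
  obtain ⟨a, m, hf⟩ := exists_eq_C_mul_T_of_isUnit f.isUnit
  obtain ⟨c, n, hg⟩ := exists_eq_C_mul_T_of_isUnit g.isUnit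
  rw [hf, hg, mapRingHom_C_mul_T, mul_pow, ← map_pow, T_pow, mul_mul_mul_comm, ← map_mul,
    ← T_add] at h
  have hπK : algebraMap R K π ≠ 0 :=
    (map_ne_zero_iff _ (IsFractionRing.injective R K)).mpr hπ.ne_zero
  exact IsDiscreteValuationRing.algebraMap_unit_mul_pow_ne hπ (by omega) a c.ne_zero
    (eq_of_C_mul_T_eq_C_mul_T hπK h)
end

section
/- Let p be a prime and n ≥ 1 an integer. Let R be a discrete valuation ring and let λ ∈ R be a nonzero element such that λ^{p^{n-1}(p-1)} divides p in R. Then for every integer k with 1 ≤ k ≤ pⁿ − 1, the element λ^{pⁿ} divides binom(pⁿ, k)·λ^k in R; equivalently, all coefficients of the polynomial ((1 + λT)^{pⁿ} − 1)/λ^{pⁿ} lie in R. -/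
/-!
Write `m = v_p(k)`. Kummer's theorem gives `p ^ (n - m) ∣ (p ^ n).choose k`, and each factor `p`
contributes `λ ^ (p ^ (n - 1) * (p - 1))`, so it suffices that
`p ^ n ≤ (n - m) * (p - 1) * p ^ (n - 1) + k`. Since `p ^ m ≤ k`, this follows from
`p ^ n - p ^ m = (p - 1) * (p ^ m + ⋯ + p ^ (n - 1)) ≤ (n - m) * (p - 1) * p ^ (n - 1)`.
-/

theorem Nat.pow_dvd_choose_prime_pow {p n k : ℕ} (hp : p.Prime) (hkn : k ≤ p ^ n) (hk0 : k ≠ 0) :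
    p ^ (n - k.factorization p) ∣ (p ^ n).choose k := by
  rw [← Nat.factorization_choose_prime_pow hp hkn hk0]
  exact Nat.ordProj_dvd _ p

theorem Nat.pow_le_pow_add_mul_pow_pred {p : ℕ} (hp : 0 < p) {m n : ℕ} (hmn : m ≤ n) :
    p ^ n ≤ p ^ m + (n - m) * (p - 1) * p ^ (n - 1) := by
  induction n, hmn using Nat.le_induction with
  | base => simp
  | succ n hmn ih =>
    have hpow : p ^ (n - 1) ≤ p ^ n := Nat.pow_le_pow_right hp (n.sub_le 1)
    calc p ^ (n + 1) = p ^ n + (p - 1) * p ^ n := by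
          rw [pow_succ]; zify [hp]; ring
      _ ≤ p ^ m + (n - m) * (p - 1) * p ^ (n - 1) + (p - 1) * p ^ n := by gcongr
      _ ≤ p ^ m + (n - m) * (p - 1) * p ^ n + (p - 1) * p ^ n := by gcongr
      _ = p ^ m + (n + 1 - m) * (p - 1) * p ^ (n + 1 - 1) := by
          rw [Nat.add_sub_cancel, Nat.sub_add_comm hmn]; ring

theorem stmt16_general (p : ℕ) (hp : p.Prime) (n : ℕ)
    (R : Type*) [CommRing R]
    (lam : R)
    (hdvd : lam ^ (p ^ (n - 1) * (p - 1)) ∣ (p : R)) :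
    ∀ k : ℕ, 1 ≤ k → k ≤ p ^ n - 1 →
      lam ^ (p ^ n) ∣ ((p ^ n).choose k : R) * lam ^ k := by
  intro k hk1 hk
  replace hk : k ≤ p ^ n := hk.trans (Nat.sub_le _ 1)
  set m := k.factorization p
  have hpm : p ^ m ≤ k := Nat.ordProj_le p (by omega)
  have hmn : m ≤ n := (Nat.pow_le_pow_iff_right hp.one_lt).1 (hpm.trans hk)
  have hchoose : lam ^ (p ^ (n - 1) * (p - 1) * (n - m)) ∣ ((p ^ n).choose k : R) := by
    have hkummer : ((p ^ (n - m) : ℕ) : R) ∣ ((p ^ n).choose k : R) :=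
      Nat.cast_dvd_cast (Nat.pow_dvd_choose_prime_pow hp hk (by omega))
    rw [pow_mul]
    exact (pow_dvd_pow_of_dvd hdvd _).trans (by exact_mod_cast hkummer)
  have hexp : p ^ n ≤ p ^ (n - 1) * (p - 1) * (n - m) + k := by
    have := Nat.pow_le_pow_add_mul_pow_pred hp.pos hmn
    linarith
  calc lam ^ (p ^ n) ∣ lam ^ (p ^ (n - 1) * (p - 1) * (n - m) + k) := pow_dvd_pow lam hexp
    _ = lam ^ (p ^ (n - 1) * (p - 1) * (n - m)) * lam ^ k := pow_add ..
    _ ∣ ((p ^ n).choose k : R) * lam ^ k := mul_dvd_mul_right hchoose _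

/-- Let `p` be a prime, `n ≥ 1`, `R` a discrete valuation ring and `lam ∈ R` a nonzero
element such that `lam^{p^{n-1}(p-1)}` divides `p` in `R`.  Then for every `1 ≤ k ≤ pⁿ − 1`,
the element `lam^{pⁿ}` divides `binom(pⁿ, k)·lam^k` in `R` (equivalently, all coefficients
of `((1 + lam·T)^{pⁿ} − 1)/lam^{pⁿ}` lie in `R`). -/
theorem stmt16 (p : ℕ) (hp : p.Prime) (n : ℕ) (hn : 1 ≤ n)
    (R : Type*) [CommRing R] [IsDomain R] [IsDiscreteValuationRing R]
    (lam : R) (hlam : lam ≠ 0)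
    (hdvd : lam ^ (p ^ (n - 1) * (p - 1)) ∣ (p : R)) :
    ∀ k : ℕ, 1 ≤ k → k ≤ p ^ n - 1 →
      lam ^ (p ^ n) ∣ ((p ^ n).choose k : R) * lam ^ k :=
  stmt16_general p hp n R lam hdvd
end
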